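/- arXiv:2207.11462 — 2 statements merged into one kernel-verified Lean document; each statement's English description precedes it below -/
import Mathlib

section
/- Let F(N,t,ξ,θ) = sin²ξ·[(N²+N)/2 + (N(N-1)/2)·cos(2θ)·(cos 2t)^{N-2} − N²·cos²θ·(cos t)^{2(N-1)}] + N·cos²ξ + sin(2ξ)·N(N-1)·sinθ·(cos t)^{N-2}·sin t. Then for every t, ξ, θ, F(N,t,ξ,θ) ≤ N² for all natural numbers N ≥ 1. -/
set_option maxHeartbeats 1000000

/-- Key polynomial inequality: for `a + b = 1`, `a, b ≥ 0`,
`a^m * b ≤ (1 + (a - b)^m)/2`. -/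
lemma qfi_key_poly (m : ℕ) (a b : ℝ) (ha : 0 ≤ a) (hb : 0 ≤ b) (hab : a + b = 1) :
    a ^ m * b ≤ (1 + (a - b) ^ m) / 2 := by
  rcases Nat.eq_zero_or_pos m with hm | hm
  · subst hm; simp; linarith
  · have hm' : m ≠ 0 := hm.ne'
    rcases le_or_gt b a with h | h
    · have h1 : 0 ≤ (a - b) ^ m := pow_nonneg (by linarith) m
      have h2 : a ^ m ≤ a := pow_le_of_le_one ha (by linarith) hm'
      have h5 : a * b ≤ 1/4 := by nlinarith [sq_nonneg (a - b)]
      nlinarith [mul_le_mul_of_nonneg_right h2 hb, h5]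
    · have h1 : (b - a) ^ m ≤ b - a := pow_le_of_le_one (by linarith) (by linarith) hm'
      have h2 : a ^ m ≤ a := pow_le_of_le_one ha (by linarith) hm'
      have h4 : -((b - a) ^ m) ≤ (a - b) ^ m := by
        have h3 : (a - b) ^ m = (-(b - a)) ^ m := by ring_nf
        rw [h3]
        rcases Nat.even_or_odd m with he | ho
        · rw [he.neg_pow]
          nlinarith [pow_nonneg (by linarith : (0:ℝ) ≤ b - a) m]
        · rw [ho.neg_pow]
      nlinarith [mul_le_mul_of_nonneg_right h2 hb]

/-- Quadratic form bound. -/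
lemma qfi_quad_bound (x y A B n : ℝ) (hxy : x ^ 2 + y ^ 2 = 1)
    (hE : 0 < n ^ 2 - n) (hBD : B ^ 2 ≤ (n ^ 2 - n) * (n ^ 2 - A)) :
    A * x ^ 2 + n * y ^ 2 + 2 * B * x * y ≤ n ^ 2 := by
  have h3 : (n ^ 2 - n) * n ^ 2 * (x ^ 2 + y ^ 2) = (n ^ 2 - n) * n ^ 2 := by rw [hxy, mul_one]
  nlinarith [sq_nonneg ((n ^ 2 - n) * y - B * x),
    mul_nonneg (sq_nonneg x) (sub_nonneg.mpr hBD), hE, h3]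

theorem qfi_le_heisenberg (N : ℕ) (hN : 1 ≤ N) (t ξ θ : ℝ) :
    (Real.sin ξ)^2 *
        (((N : ℝ)^2 + N)/2
          + ((N : ℝ) * ((N : ℝ) - 1)/2) * Real.cos (2*θ) * (Real.cos (2*t))^(N-2)
          - (N : ℝ)^2 * (Real.cos θ)^2 * (Real.cos t)^(2*(N-1)))
      + (N : ℝ) * (Real.cos ξ)^2
      + Real.sin (2*ξ) * (N : ℝ) * ((N : ℝ) - 1) * Real.sin θ
          * (Real.cos t)^(N-2) * Real.sin t
    ≤ (N : ℝ)^2 := by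
  obtain _ | N := N
  · omega
  obtain _ | m := N
  · -- N = 1
    norm_num
    nlinarith [Real.sin_sq_add_cos_sq ξ, Real.sin_sq_add_cos_sq θ, sq_nonneg (Real.sin ξ),
      sq_nonneg (Real.sin ξ * Real.sin θ), sq_nonneg (Real.sin ξ * Real.cos θ)]
  · -- N = m + 2
    set x := Real.sin ξ with hx
    set y := Real.cos ξ with hy
    set c := Real.cos t with hc
    set s := Real.sin t with hs
    set w := Real.sin θ with hwdef
    set v := Real.cos θ with hv
    have hxy : x ^ 2 + y ^ 2 = 1 := Real.sin_sq_add_cos_sq ξ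
    have hab : c ^ 2 + s ^ 2 = 1 := by
      have := Real.sin_sq_add_cos_sq t; linarith
    have hwv : w ^ 2 + v ^ 2 = 1 := Real.sin_sq_add_cos_sq θ
    have hc2t : Real.cos (2 * t) = c ^ 2 - s ^ 2 := Real.cos_two_mul' t
    have hc2θ : Real.cos (2 * θ) = 1 - 2 * w ^ 2 := by
      rw [Real.cos_two_mul' θ]; rw [← hv, ← hwdef]; linarith
    have hs2ξ : Real.sin (2 * ξ) = 2 * x * y := Real.sin_two_mul ξ
    have hNcast : ((m + 1 + 1 : ℕ) : ℝ) = (m : ℝ) + 2 := by push_cast; ring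
    have he1 : m + 1 + 1 - 2 = m := rfl
    have he2 : 2 * (m + 1 + 1 - 1) = 2 * (m + 1) := rfl
    rw [hNcast, he1, he2, hc2t, hc2θ, hs2ξ]
    set n : ℝ := (m : ℝ) + 2 with hn
    have hn2 : (2 : ℝ) ≤ n := by
      have : (0:ℝ) ≤ (m:ℝ) := Nat.cast_nonneg m
      linarith
    set a : ℝ := c ^ 2 with hadef
    set b : ℝ := s ^ 2 with hbdef
    have ha : 0 ≤ a := sq_nonneg c
    have hb : 0 ≤ b := sq_nonneg s
    have hcn : c ^ (2 * (m + 1)) = a ^ (m + 1) := by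
      rw [hadef, ← pow_mul]
    have hP2 : (c ^ m) ^ 2 = a ^ m := by
      rw [hadef, ← pow_mul, ← pow_mul, Nat.mul_comm]
    set Q : ℝ := (a - b) ^ m with hQdef
    have hQ1 : Q ≤ 1 := by
      calc Q ≤ |Q| := le_abs_self Q
        _ = |a - b| ^ m := by rw [hQdef, abs_pow]
        _ ≤ 1 := pow_le_one₀ (abs_nonneg _) (abs_le.mpr ⟨by linarith, by linarith⟩)
    have hkey : a ^ m * b ≤ (1 + Q) / 2 := qfi_key_poly m a b ha hb hab
    -- kernel inequality
    have hw2 : w ^ 2 ≤ 1 := by linarith [sq_nonneg v]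
    have hker : 0 ≤ w ^ 2 * (Q - a ^ m * b) + (1 - Q) / 2 := by
      have k1 : 0 ≤ w ^ 2 * ((1 + Q)/2 - a ^ m * b) :=
        mul_nonneg (sq_nonneg w) (by linarith)
      have k2 : 0 ≤ (1 - w ^ 2) * ((1 - Q)/2) :=
        mul_nonneg (by linarith) (by linarith)
      linarith [k1, k2]
    set A : ℝ := (n ^ 2 + n) / 2 + n * (n - 1) / 2 * (1 - 2 * w ^ 2) * Q
        - n ^ 2 * v ^ 2 * a ^ (m + 1) with hA
    set B : ℝ := n * (n - 1) * w * (c ^ m) * s with hB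
    clear_value x y c s w v n a b Q A B
    have hE : (0:ℝ) < n ^ 2 - n := by
      have h1 : 0 < n * (n - 1) := mul_pos (by linarith) (by linarith)
      linarith
    have hBD : B ^ 2 ≤ (n ^ 2 - n) * (n ^ 2 - A) := by
      have hB2 : B ^ 2 = (n * (n - 1)) ^ 2 * (w ^ 2 * (a ^ m * b)) := by
        rw [hB]
        have : (n * (n - 1) * w * c ^ m * s) ^ 2
            = (n * (n - 1)) ^ 2 * (w ^ 2 * ((c ^ m) ^ 2 * s ^ 2)) := by ring
        rw [this, hP2, hbdef]
      have hDrw : n ^ 2 - A = n * (n - 1) * (w ^ 2 * (Q - a ^ m * b) + (1 - Q) / 2)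
          + n * (n - 1) * (w ^ 2 * (a ^ m * b)) + n ^ 2 * v ^ 2 * a ^ (m + 1) := by
        rw [hA]; ring
      have hpos : 0 ≤ n ^ 2 * v ^ 2 * a ^ (m + 1) := by positivity
      have hnn : (0:ℝ) ≤ n * (n - 1) := le_of_lt (mul_pos (by linarith) (by linarith))
      have hwab : 0 ≤ w ^ 2 * (a ^ m * b) := by positivity
      rw [hB2, hDrw]
      have k1 : 0 ≤ (n * (n - 1)) * ((n * (n - 1)) * (w ^ 2 * (Q - a ^ m * b) + (1 - Q) / 2)) :=
        mul_nonneg hnn (mul_nonneg hnn hker)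
      have k2 : 0 ≤ (n * (n - 1)) * (n ^ 2 * v ^ 2 * a ^ (m + 1)) := mul_nonneg hnn hpos
      linarith [k1, k2]
    have main := qfi_quad_bound x y A B n hxy hE hBD
    rw [hA, hB] at main
    rw [hcn]
    linarith [main]
end

section
/- Define f(N) = −(N/8)(N² + N + N(N−1)(cos 2t)^{N−2}) + (1/4)[(N(N−1)(N−2)/2)(cos 2t)^{N−3} + N²(cos 2t)^{N−1} + 2N(N−1)cos 2t + (N(N−1)(N−2)/2)cos 2t], with t = c/N^α, 0 < α < 1/2, c > 0. Then f(N)² / (N^{6−4α} /16) → c⁴ as N → ∞. -/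
/-!
Write `C = cos 2t`. Then `4 f(N) = (N³ + N² - 2N)/2 · (C - 1) - N + R_N`, where `R_N` collects
the three terms carrying a power `C^(N-k)`. Because `N^(2α) (2t)² = 4c²` and `2t → 0`, the Taylor
expansion of `cos` gives `N^(2α) (C - 1) → -2c²`, so the first term is `-c² N^(3-2α) (1 + o(1))`,
while `N = o(N^(3-2α))`. For the remainder, `0 ≤ C ≤ exp(-(2/π²)(2t)²)` yields
`C^(N-3) ≤ exp(-κ N^(1-2α))` with `κ > 0`; as `α < 1/2` this beats every power of `N`. Hence
`4 f(N) / N^(3-2α) → -c²`, and squaring gives the claim.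
-/

open Filter Real Topology

theorem tendsto_rpow_mul_exp_neg_mul_rpow_atTop_nhds_zero (p : ℝ) {b β : ℝ} (hb : 0 < b)
    (hβ : 0 < β) : Tendsto (fun x : ℝ => x ^ p * exp (-b * x ^ β)) atTop (𝓝 0) := by
  refine ((tendsto_rpow_mul_exp_neg_mul_atTop_nhds_zero (p / β) b hb).comp
    (tendsto_rpow_atTop hβ)).congr' ?_
  filter_upwards [eventually_ge_atTop 0] with x hx
  rw [Function.comp_apply, ← rpow_mul hx, mul_div_cancel₀ p hβ.ne']

theorem cos_pow_le_exp_neg_mul_sq {x : ℝ} (hx : |x| ≤ π / 2) (n : ℕ) :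
    cos x ^ n ≤ exp (-(2 / π ^ 2) * x ^ 2 * n) := by
  have hcos_nonneg : 0 ≤ cos x := cos_nonneg_of_neg_pi_div_two_le_of_le
    (abs_le.mp hx).1 (abs_le.mp hx).2
  have hcos_le : cos x ≤ exp (-(2 / π ^ 2) * x ^ 2) :=
    (cos_le_one_sub_mul_cos_sq (hx.trans (by linarith [pi_pos]))).trans
      (by linarith [add_one_le_exp (-(2 / π ^ 2) * x ^ 2)])
  calc cos x ^ n ≤ exp (-(2 / π ^ 2) * x ^ 2) ^ n := pow_le_pow_left₀ hcos_nonneg hcos_le n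
    _ = exp (-(2 / π ^ 2) * x ^ 2 * n) := by rw [← exp_nat_mul, mul_comm]

theorem tendsto_mul_cos_sub_one {ι : Type*} {l : Filter ι} {a θ : ι → ℝ} {L : ℝ}
    (hθ : Tendsto θ l (𝓝 0)) (ha : ∀ᶠ i in l, a i * θ i ^ 2 = L) :
    Tendsto (fun i => a i * (cos (θ i) - 1)) l (𝓝 (-(L / 2))) := by
  have hsmall : ∀ᶠ i in l, |θ i| ≤ 1 := by
    simpa only [Real.norm_eq_abs] using hθ.norm.eventually (eventually_le_nhds (by simp))
  have herror : Tendsto (fun i => a i * (cos (θ i) - 1) + L / 2) l (𝓝 0) := by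
    refine squeeze_zero_norm' ?_ (((hθ.pow 2).const_mul (|L| * (5 / 96))).trans_eq (by simp))
    filter_upwards [ha, hsmall] with i hi hθi
    calc ‖a i * (cos (θ i) - 1) + L / 2‖ = |a i| * |cos (θ i) - (1 - θ i ^ 2 / 2)| := by
          rw [Real.norm_eq_abs, ← abs_mul, ← hi]; ring_nf
      _ ≤ |a i| * (|θ i| ^ 4 * (5 / 96)) := by gcongr; exact cos_bound hθi
      _ = |L| * (5 / 96) * θ i ^ 2 := by
          rw [← hi, abs_mul, abs_pow, ← sq_abs (θ i)]; ring
  simpa using herror.sub_const (L / 2)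

/-- The angle `2t = 2c / N^α` of the twist. -/
noncomputable def twistAngle (c α : ℝ) (N : ℕ) : ℝ := 2 * (c / (N : ℝ) ^ α)

theorem rpow_two_mul_mul_twistAngle_sq (c α : ℝ) {N : ℕ} (hN : N ≠ 0) :
    (N : ℝ) ^ (2 * α) * twistAngle c α N ^ 2 = 4 * c ^ 2 := by
  have hpos : (0 : ℝ) < (N : ℝ) ^ α := rpow_pos_of_pos (by positivity) α
  rw [twistAngle, mul_comm 2 α, rpow_mul (Nat.cast_nonneg _), rpow_two]
  field_simp
  ring

theorem tendsto_twistAngle_atTop (c : ℝ) {α : ℝ} (hα : 0 < α) :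
    Tendsto (twistAngle c α) atTop (𝓝 0) := by
  have h := ((tendsto_rpow_atTop hα).comp tendsto_natCast_atTop_atTop).const_div_atTop c
  have h2 := h.const_mul 2
  rwa [mul_zero] at h2

theorem eventually_abs_twistAngle_le (c : ℝ) {α ε : ℝ} (hα : 0 < α) (hε : 0 < ε) :
    ∀ᶠ N in atTop, |twistAngle c α N| ≤ ε := by
  simpa only [Real.norm_eq_abs] using
    (tendsto_twistAngle_atTop c hα).norm.eventually (eventually_le_nhds (by simpa using hε))

theorem tendsto_rpow_mul_cos_twistAngle_pow (p : ℝ) {c α : ℝ} (hc : c ≠ 0) (hα0 : 0 < α)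
    (hα : α < 1 / 2) (k : ℕ) :
    Tendsto (fun N : ℕ => (N : ℝ) ^ p * cos (twistAngle c α N) ^ (N - k)) atTop (𝓝 0) := by
  set b := 4 * c ^ 2 / π ^ 2
  have hdecay : Tendsto (fun N : ℕ => (N : ℝ) ^ p * exp (-b * (N : ℝ) ^ (1 - 2 * α)))
      atTop (𝓝 0) :=
    (tendsto_rpow_mul_exp_neg_mul_rpow_atTop_nhds_zero p (by positivity) (by linarith)).comp
      tendsto_natCast_atTop_atTop
  have hsmall := eventually_abs_twistAngle_le c hα0 (half_pos pi_pos)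
  refine squeeze_zero' ?_ ?_ hdecay
  · filter_upwards [hsmall, eventually_gt_atTop 0] with N hθ hN
    have := cos_nonneg_of_neg_pi_div_two_le_of_le (abs_le.mp hθ).1 (abs_le.mp hθ).2
    positivity
  filter_upwards [hsmall, eventually_ge_atTop (2 * k), eventually_gt_atTop 0] with N hθ hNk hN
  have hNpos : (0 : ℝ) < N := by positivity
  have hexp : -(2 / π ^ 2) * twistAngle c α N ^ 2 * ((N - k : ℕ) : ℝ)
      ≤ -b * (N : ℝ) ^ (1 - 2 * α) := by
    have hangle := rpow_two_mul_mul_twistAngle_sq c α hN.ne'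
    have hsplit : (N : ℝ) = (N : ℝ) ^ (1 - 2 * α) * (N : ℝ) ^ (2 * α) := by
      rw [← rpow_add hNpos]; simp
    have hNk' : (N : ℝ) ≤ 2 * ((N - k : ℕ) : ℝ) := by
      have : (2 * k : ℝ) ≤ N := by exact_mod_cast hNk
      rw [Nat.cast_sub (by omega)]
      linarith
    have hscale : twistAngle c α N ^ 2 * N = 4 * c ^ 2 * (N : ℝ) ^ (1 - 2 * α) := by
      linear_combination twistAngle c α N ^ 2 * hsplit + (N : ℝ) ^ (1 - 2 * α) * hangle
    calc -(2 / π ^ 2) * twistAngle c α N ^ 2 * ((N - k : ℕ) : ℝ)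
        = -(2 / π ^ 2) * (twistAngle c α N ^ 2 * ((N - k : ℕ) : ℝ)) := by ring
      _ ≤ -(2 / π ^ 2) * (twistAngle c α N ^ 2 * N / 2) :=
          mul_le_mul_of_nonpos_left (by nlinarith [sq_nonneg (twistAngle c α N)])
            (neg_nonpos.mpr (by positivity))
      _ = -b * (N : ℝ) ^ (1 - 2 * α) := by linear_combination (-(1 / π ^ 2)) * hscale
  gcongr
  exact (cos_pow_le_exp_neg_mul_sq hθ _).trans (exp_le_exp.mpr hexp)

/-- `f(N)` with `cos 2t` replaced by a free variable `C`. -/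
noncomputable def signalSlope (N : ℕ) (C : ℝ) : ℝ :=
  -((N : ℝ) / 8) * ((N : ℝ) ^ 2 + N + (N : ℝ) * ((N : ℝ) - 1) * C ^ (N - 2))
    + (1 / 4) * ((N : ℝ) * ((N : ℝ) - 1) * ((N : ℝ) - 2) / 2 * C ^ (N - 3)
      + (N : ℝ) ^ 2 * C ^ (N - 1) + 2 * (N : ℝ) * ((N : ℝ) - 1) * C
      + (N : ℝ) * ((N : ℝ) - 1) * ((N : ℝ) - 2) / 2 * C)

noncomputable def signalRemainder (N : ℕ) (C : ℝ) : ℝ :=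
  -((N : ℝ) ^ 2 * ((N : ℝ) - 1) / 2) * C ^ (N - 2)
    + (N : ℝ) * ((N : ℝ) - 1) * ((N : ℝ) - 2) / 2 * C ^ (N - 3) + (N : ℝ) ^ 2 * C ^ (N - 1)

theorem four_mul_signalSlope (N : ℕ) (C : ℝ) :
    4 * signalSlope N C
      = ((N : ℝ) ^ 3 + (N : ℝ) ^ 2 - 2 * N) / 2 * (C - 1) - N + signalRemainder N C := by
  unfold signalSlope signalRemainder
  ring

theorem abs_signalRemainder_le {N : ℕ} (hN : 2 ≤ N) {C : ℝ} (hC0 : 0 ≤ C) (hC1 : C ≤ 1) :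
    |signalRemainder N C| ≤ 2 * (N : ℝ) ^ 3 * C ^ (N - 3) := by
  have hx : (2 : ℝ) ≤ N := by exact_mod_cast hN
  have hP1 : C ^ (N - 1) ≤ C ^ (N - 3) := pow_le_pow_of_le_one hC0 hC1 (by omega)
  have hP2 : C ^ (N - 2) ≤ C ^ (N - 3) := pow_le_pow_of_le_one hC0 hC1 (by omega)
  have hP1' : 0 ≤ C ^ (N - 1) := pow_nonneg hC0 _
  have hP2' : 0 ≤ C ^ (N - 2) := pow_nonneg hC0 _
  unfold signalRemainder
  generalize C ^ (N - 1) = P₁ at *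
  generalize C ^ (N - 2) = P₂ at *
  generalize C ^ (N - 3) = P₃ at *
  generalize (N : ℝ) = x at *
  have hx1 : 0 ≤ x - 1 := by linarith
  have hx2 : 0 ≤ x - 2 := by linarith
  have ha : 0 ≤ x ^ 2 * (x - 1) / 2 := by positivity
  have hb : 0 ≤ x * (x - 1) * (x - 2) / 2 := by positivity
  have hsq : 0 ≤ x ^ 2 := sq_nonneg x
  rw [abs_le]
  constructor
  · nlinarith [mul_le_mul_of_nonneg_left hP2 ha, mul_nonneg hb (hP2'.trans hP2),
      mul_nonneg hsq hP1']
  · nlinarith [mul_nonneg ha hP2', mul_le_mul_of_nonneg_left hP1 hsq,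
      mul_nonneg hsq (hP2'.trans hP2)]

theorem tendsto_rpow_mul_signalRemainder_div {c α : ℝ} (hc : c ≠ 0) (hα0 : 0 < α)
    (hα : α < 1 / 2) :
    Tendsto (fun N : ℕ => (N : ℝ) ^ (2 * α)
      * (signalRemainder N (cos (twistAngle c α N)) / (N : ℝ) ^ 3)) atTop (𝓝 0) := by
  refine squeeze_zero_norm' ?_
    (by simpa using (tendsto_rpow_mul_cos_twistAngle_pow (2 * α) hc hα0 hα 3).const_mul 2)
  filter_upwards [eventually_abs_twistAngle_le c hα0 (half_pos pi_pos),
    eventually_ge_atTop 2] with N hθ hN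
  have hcos := cos_nonneg_of_neg_pi_div_two_le_of_le (abs_le.mp hθ).1 (abs_le.mp hθ).2
  have hNpos : (0 : ℝ) < N := by positivity
  rw [norm_mul, norm_div, norm_of_nonneg (rpow_nonneg hNpos.le _),
    norm_of_nonneg (by positivity : (0 : ℝ) ≤ (N : ℝ) ^ 3), Real.norm_eq_abs]
  calc _ ≤ (N : ℝ) ^ (2 * α)
        * (2 * (N : ℝ) ^ 3 * cos (twistAngle c α N) ^ (N - 3) / (N : ℝ) ^ 3) := by
        gcongr; exact abs_signalRemainder_le hN hcos (cos_le_one _)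
    _ = _ := by field_simp

theorem tendsto_four_mul_signalSlope_div_rpow {c α : ℝ} (hc : c ≠ 0) (hα0 : 0 < α)
    (hα : α < 1 / 2) :
    Tendsto (fun N : ℕ => 4 * signalSlope N (cos (twistAngle c α N)) / (N : ℝ) ^ (3 - 2 * α))
      atTop (𝓝 (-c ^ 2)) := by
  have hquad : Tendsto (fun N : ℕ => (N : ℝ) ^ (2 * α) * (cos (twistAngle c α N) - 1))
      atTop (𝓝 (-(4 * c ^ 2 / 2))) :=
    tendsto_mul_cos_sub_one (tendsto_twistAngle_atTop c hα0) <|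
      (eventually_ne_atTop 0).mono fun N hN => rpow_two_mul_mul_twistAngle_sq c α hN
  have hinv : Tendsto (fun N : ℕ => (N : ℝ)⁻¹) atTop (𝓝 0) :=
    tendsto_inv_atTop_zero.comp tendsto_natCast_atTop_atTop
  have hcoef : Tendsto (fun N : ℕ => (1 + (N : ℝ)⁻¹ - 2 * (N : ℝ)⁻¹ ^ 2) / 2)
      atTop (𝓝 (1 / 2)) := by
    simpa using (((hinv.const_add 1).sub ((hinv.pow 2).const_mul 2)).div_const 2)
  have hlin : Tendsto (fun N : ℕ => (N : ℝ) ^ (2 * α - 2)) atTop (𝓝 0) := by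
    have h := (tendsto_rpow_neg_atTop (by linarith : 0 < 2 - 2 * α)).comp
      tendsto_natCast_atTop_atTop
    simpa only [neg_sub, Function.comp_def] using h
  have hrem := tendsto_rpow_mul_signalRemainder_div hc hα0 hα
  have h := ((hcoef.mul hquad).sub hlin).add hrem
  rw [show (1 / 2 : ℝ) * -(4 * c ^ 2 / 2) - 0 + 0 = -c ^ 2 by ring] at h
  refine h.congr' ?_
  filter_upwards [eventually_gt_atTop 0] with N hN
  have hNpos : (0 : ℝ) < N := by positivity
  rw [four_mul_signalSlope, rpow_sub hNpos, rpow_sub hNpos, rpow_two, rpow_ofNat]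
  field_simp

theorem signal_derivative_asymptotics (c α : ℝ) (hc : 0 < c)
    (hα0 : 0 < α) (hα : α < 1/2) :
    Filter.Tendsto
      (fun N : ℕ =>
        (-((N : ℝ)/8) * ((N : ℝ)^2 + N
            + (N : ℝ) * ((N : ℝ) - 1) * (Real.cos (2*(c/(N : ℝ)^α)))^(N-2))
          + (1/4) * ((N : ℝ) * ((N : ℝ) - 1) * ((N : ℝ) - 2)/2
              * (Real.cos (2*(c/(N : ℝ)^α)))^(N-3)
            + (N : ℝ)^2 * (Real.cos (2*(c/(N : ℝ)^α)))^(N-1)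
            + 2 * (N : ℝ) * ((N : ℝ) - 1) * Real.cos (2*(c/(N : ℝ)^α))
            + (N : ℝ) * ((N : ℝ) - 1) * ((N : ℝ) - 2)/2
              * Real.cos (2*(c/(N : ℝ)^α))))^2
        / ((N : ℝ)^((6 : ℝ) - 4*α) / 16))
      Filter.atTop (nhds (c^4)) := by
  change Tendsto (fun N : ℕ => signalSlope N (cos (twistAngle c α N)) ^ 2
    / ((N : ℝ) ^ ((6 : ℝ) - 4 * α) / 16)) atTop (𝓝 (c ^ 4))
  have h := (tendsto_four_mul_signalSlope_div_rpow hc.ne' hα0 hα).pow 2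
  rw [neg_sq, ← pow_mul] at h
  refine h.congr' ?_
  filter_upwards [eventually_gt_atTop 0] with N hN
  have hNpos : (0 : ℝ) < N := by positivity
  have hsq : (N : ℝ) ^ ((6 : ℝ) - 4 * α) = ((N : ℝ) ^ (3 - 2 * α)) ^ 2 := by
    rw [← rpow_mul_natCast hNpos.le]; ring_nf
  rw [hsq]
  field_simp
  ring
end
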